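/- arXiv:1811.06615 — 2 statements merged into one kernel-verified Lean document; each statement's English description precedes it below -/
import Mathlib

section
/- For every u ∈ H^α(S_ε) with α ∈ (0,1), the Gagliardo semi-norms satisfy the exact rescaling identity ‖T^b_ε(u)‖'_{L²(Ω; H^α(S))} = ε^{1/2+α} ‖u‖'_{H^α(S_ε)}. -/
open MeasureTheory ENNReal Filter Topology Classical

noncomputable section

/-- Points of `ℝ³`. -/
abbrev V3 : Type := Fin 3 → ℝ

/-- The open reference cell `Y = (0,1)³`. -/
def Ycube : Set V3 := {y | ∀ i, 0 < y i ∧ y i < 1}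

/-- The open cell `εξ + εY`. -/
def cellOf (ε : ℝ) (ξ : Fin 3 → ℤ) : Set V3 :=
  {x | ∀ i, ε * (ξ i : ℝ) < x i ∧ x i < ε * (ξ i : ℝ) + ε}

/-- `Ξ_ε = {ξ ∈ ℤ³ : εξ + εY ⊆ Ω}`. -/
def Xi (ε : ℝ) (Ω : Set V3) : Set (Fin 3 → ℤ) := {ξ | cellOf ε ξ ⊆ Ω}

/-- `Ω̂_ε`, the interior of the union of the closed cells contained in `Ω`. -/
def OmHat (ε : ℝ) (Ω : Set V3) : Set V3 :=
  interior (⋃ ξ ∈ Xi ε Ω, closure (cellOf ε ξ))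

/-- `ε[x/ε]`, componentwise. -/
def floorPt (ε : ℝ) (x : V3) : V3 := fun i => ε * (⌊x i / ε⌋ : ℝ)

/-- `{x/ε}`, the fractional part, componentwise. -/
def fracPt (ε : ℝ) (x : V3) : V3 := fun i => x i / ε - (⌊x i / ε⌋ : ℝ)

/-- The (boundary) unfolding operator `T_ε(φ)(x,y) = φ(ε[x/ε] + εy)` on `Ω̂_ε`, `0` elsewhere. -/
def unfoldOp {α : Type*} [Zero α] (ε : ℝ) (Ω : Set V3) (φ : V3 → α) : V3 × V3 → α :=
  fun p => if p.1 ∈ OmHat ε Ω then φ (floorPt ε p.1 + ε • p.2) else 0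

/-- `S_ε = {x ∈ Ω̂_ε : {x/ε} ∈ S}`. -/
def Seps (ε : ℝ) (Ω : Set V3) (S : Set V3) : Set V3 :=
  {x ∈ OmHat ε Ω | fracPt ε x ∈ S}

/-- The cracked domain `Ω*_ε = Ω \ S_ε`. -/
def OmStar (ε : ℝ) (Ω S : Set V3) : Set V3 := Ω \ Seps ε Ω S

/-- Squared Gagliardo semi-norm of order `α` on a surface `A`, with surface measure `μH[2]`. -/
def gaglSq (α : ℝ) (A : Set V3) (v : V3 → ℝ) : ℝ≥0∞ :=
  ∫⁻ x in A, ∫⁻ y in A, ENNReal.ofReal ((v x - v y) ^ 2 / dist x y ^ (2 + 2 * α)) ∂μH[2] ∂μH[2]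

/-- The crack `εξ + εS` in the cell `εξ + εY`. -/
def cellCrack (ε : ℝ) (ξ : Fin 3 → ℤ) (S : Set V3) : Set V3 :=
  (fun y : V3 => (fun i => ε * (ξ i : ℝ) + ε * y i : V3)) '' S

/-- Cell-wise squared Gagliardo semi-norm on `S_ε`: the sum over the connected components. -/
def gaglSqSeps (ε α : ℝ) (Ω S : Set V3) (v : V3 → ℝ) : ℝ≥0∞ :=
  ∑' ξ : Xi ε Ω, gaglSq α (cellCrack ε (↑ξ) S) v

/-!
On a cell `εξ + εY` of `Ω̂_ε` the unfolded function `T^b_ε(u)(x, ·)` does not depend on `x`: it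
is `u` pulled back along the homothety `y ↦ εξ + εy`, which maps `S` onto the crack `εξ + εS`.
This homothety multiplies `μH[2]` by `ε²` and distances by `ε`, so the Gagliardo integral over
the crack is `ε^(2 + 2 - (2 + 2α)) = ε^(2 - 2α)` times the one over `S`, while integrating over the
cell contributes `ε³`. The cells of `Ξ_ε` cover `Ω ∩ Ω̂_ε` up to the Lebesgue-null cell faces, so
the integral over `Ω` is `ε^(1 + 2α)` times the cell-wise semi-norm on `S_ε`.
-/

open scoped Pointwise

section Homothety

variable {E : Type*} [NormedAddCommGroup E] [NormedSpace ℝ E]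

lemma surjective_add_smul (c : E) {ε : ℝ} (hε : ε ≠ 0) :
    Function.Surjective fun y : E => c + ε • y :=
  ((Homeomorph.smulOfNeZero ε hε).trans (Homeomorph.addLeft c)).surjective

variable [MeasurableSpace E] [BorelSpace E]

lemma measurableEmbedding_add_smul (c : E) {ε : ℝ} (hε : ε ≠ 0) :
    MeasurableEmbedding fun y : E => c + ε • y :=
  ((Homeomorph.smulOfNeZero ε hε).trans (Homeomorph.addLeft c)).measurableEmbedding

lemma hausdorffMeasure_image_add_smul {d : ℝ} (hd : 0 ≤ d) (c : E) {ε : ℝ} (hε : 0 < ε)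
    (s : Set E) :
    μH[d] ((fun y => c + ε • y) '' s) = ENNReal.ofReal (ε ^ d) * μH[d] s := by
  have himage : (fun y => c + ε • y) '' s = c +ᵥ ε • s := by
    rw [← Set.image_smul, ← Set.image_vadd, Set.image_image]; rfl
  rw [himage, hausdorffMeasure_vadd c (Or.inr (AddAction.surjective c)),
    Measure.hausdorffMeasure_smul₀ hd hε.ne', Real.nnnorm_of_nonneg hε.le, ENNReal.smul_def,
    smul_eq_mul, ENNReal.ofReal, Real.toNNReal_of_nonneg (by positivity)]
  rfl

lemma restrict_image_add_smul {d : ℝ} (hd : 0 ≤ d) (c : E) {ε : ℝ} (hε : 0 < ε) (s : Set E) :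
    (μH[d] : Measure E).restrict ((fun y => c + ε • y) '' s)
      = ENNReal.ofReal (ε ^ d) • (μH[d].restrict s).map fun y => c + ε • y := by
  have hf := measurableEmbedding_add_smul c hε.ne'
  ext A hA
  rw [Measure.restrict_apply hA, Measure.smul_apply, smul_eq_mul,
    Measure.map_apply hf.measurable hA, Measure.restrict_apply (hf.measurable hA),
    ← hausdorffMeasure_image_add_smul hd c hε, Set.image_inter hf.injective,
    Set.image_preimage_eq _ (surjective_add_smul c hε.ne')]

lemma setLIntegral_image_add_smul {d : ℝ} (hd : 0 ≤ d) (c : E) {ε : ℝ} (hε : 0 < ε)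
    (s : Set E) (g : E → ℝ≥0∞) :
    ∫⁻ x in (fun y => c + ε • y) '' s, g x ∂μH[d]
      = ENNReal.ofReal (ε ^ d) * ∫⁻ y in s, g (c + ε • y) ∂μH[d] := by
  rw [restrict_image_add_smul hd c hε, lintegral_smul_measure,
    (measurableEmbedding_add_smul c hε.ne').lintegral_map, smul_eq_mul]

end Homothety

lemma gaglSq_image_add_smul {ε : ℝ} (hε : 0 < ε) (α : ℝ) (c : V3) (S : Set V3) (u : V3 → ℝ) :
    gaglSq α ((fun y => c + ε • y) '' S) u
      = ENNReal.ofReal (ε ^ (2 - 2 * α)) * gaglSq α S (fun y => u (c + ε • y)) := by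
  have hkernel : ∀ (a : ℝ) (x y : V3),
      ENNReal.ofReal (a / dist (c + ε • x) (c + ε • y) ^ (2 + 2 * α))
        = ENNReal.ofReal (ε ^ (-(2 + 2 * α))) * ENNReal.ofReal (a / dist x y ^ (2 + 2 * α)) := by
    intro a x y
    rw [dist_add_left, dist_smul₀, Real.norm_of_nonneg hε.le,
      Real.mul_rpow hε.le dist_nonneg, Real.rpow_neg hε.le, ← ENNReal.ofReal_mul (by positivity),
      div_mul_eq_div_div_swap, div_eq_inv_mul (a / _)]
  have hscale : ENNReal.ofReal (ε ^ (2 : ℝ)) * (ENNReal.ofReal (ε ^ (2 : ℝ))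
      * ENNReal.ofReal (ε ^ (-(2 + 2 * α)))) = ENNReal.ofReal (ε ^ (2 - 2 * α)) := by
    rw [← ENNReal.ofReal_mul (by positivity), ← ENNReal.ofReal_mul (by positivity),
      ← Real.rpow_add hε, ← Real.rpow_add hε]
    ring_nf
  unfold gaglSq
  simp_rw [setLIntegral_image_add_smul zero_le_two c hε, hkernel]
  simp_rw [lintegral_const_mul' _ _ ENNReal.ofReal_ne_top, ← hscale, mul_assoc]

def cellCorner (ε : ℝ) (ξ : Fin 3 → ℤ) : V3 := fun i => ε * (ξ i : ℝ)

def cellFaces (ε : ℝ) : Set V3 := {x | ∃ i, ∃ n : ℤ, x i = ε * n}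

lemma cellOf_eq_pi (ε : ℝ) (ξ : Fin 3 → ℤ) :
    cellOf ε ξ = Set.univ.pi fun i => Set.Ioo (ε * (ξ i : ℝ)) (ε * (ξ i : ℝ) + ε) := by
  ext x
  simp [cellOf]

lemma isOpen_cellOf (ε : ℝ) (ξ : Fin 3 → ℤ) : IsOpen (cellOf ε ξ) := by
  rw [cellOf_eq_pi]
  exact isOpen_set_pi Set.finite_univ fun i _ => isOpen_Ioo

lemma volume_cellOf {ε : ℝ} (hε : 0 ≤ ε) (ξ : Fin 3 → ℤ) :
    volume (cellOf ε ξ) = ENNReal.ofReal (ε ^ 3) := by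
  simp [cellOf_eq_pi, volume_pi_pi, Real.volume_Ioo, ENNReal.ofReal_pow hε]

lemma floor_div_of_mem_cellOf {ε : ℝ} (hε : 0 < ε) {ξ : Fin 3 → ℤ} {x : V3}
    (hx : x ∈ cellOf ε ξ) (i : Fin 3) : ⌊x i / ε⌋ = ξ i := by
  obtain ⟨h1, h2⟩ := hx i
  rw [Int.floor_eq_iff, le_div_iff₀ hε, div_lt_iff₀ hε]
  constructor <;> linarith

lemma floorPt_of_mem_cellOf {ε : ℝ} (hε : 0 < ε) {ξ : Fin 3 → ℤ} {x : V3}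
    (hx : x ∈ cellOf ε ξ) : floorPt ε x = cellCorner ε ξ := by
  funext i
  rw [floorPt, floor_div_of_mem_cellOf hε hx i, cellCorner]

lemma pairwise_disjoint_cellOf {ε : ℝ} (hε : 0 < ε) :
    Pairwise (Function.onFun Disjoint (cellOf ε)) := by
  intro ξ η hne
  refine Set.disjoint_left.mpr fun x hxξ hxη => hne (funext fun i => ?_)
  rw [← floor_div_of_mem_cellOf hε hxξ i, ← floor_div_of_mem_cellOf hε hxη i]

lemma cellOf_subset_OmHat {ε : ℝ} {Ω : Set V3} {ξ : Fin 3 → ℤ} (hξ : ξ ∈ Xi ε Ω) :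
    cellOf ε ξ ⊆ OmHat ε Ω :=
  interior_maximal (subset_closure.trans (Set.subset_biUnion_of_mem
    (u := fun ξ => closure (cellOf ε ξ)) hξ)) (isOpen_cellOf ε ξ)

lemma disjoint_cellOf_cellFaces {ε : ℝ} (hε : 0 < ε) (ξ : Fin 3 → ℤ) :
    Disjoint (cellOf ε ξ) (cellFaces ε) := by
  refine Set.disjoint_left.mpr fun x hx ⟨i, n, hn⟩ => ?_
  obtain ⟨h1, h2⟩ := hx i
  rw [hn, ← mul_add_one] at *
  have hlt : (ξ i : ℝ) < n ∧ (n : ℝ) < ξ i + 1 :=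
    ⟨(mul_lt_mul_iff_right₀ hε).mp h1, (mul_lt_mul_iff_right₀ hε).mp h2⟩
  norm_cast at hlt
  omega

lemma mem_cellOf_of_mem_closure {ε : ℝ} {ξ : Fin 3 → ℤ} {x : V3}
    (hx : x ∈ closure (cellOf ε ξ)) (hxF : x ∉ cellFaces ε) : x ∈ cellOf ε ξ := by
  have hcl : x ∈ Set.univ.pi fun i => Set.Icc (ε * (ξ i : ℝ)) (ε * (ξ i : ℝ) + ε) := by
    refine closure_minimal (fun y hy i _ => ?_) (isClosed_set_pi fun i _ => isClosed_Icc) hx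
    exact ⟨(hy i).1.le, (hy i).2.le⟩
  intro i
  obtain ⟨h1, h2⟩ := hcl i (Set.mem_univ i)
  refine ⟨h1.lt_of_ne fun h => hxF ⟨i, ξ i, h.symm⟩, h2.lt_of_ne fun h => hxF ⟨i, ξ i + 1, ?_⟩⟩
  push_cast
  linarith

lemma volume_cellFaces (ε : ℝ) : volume (cellFaces ε) = 0 := by
  have hunion : cellFaces ε = ⋃ i, ⋃ n : ℤ, {x : V3 | x i = ε * n} := by
    ext x
    simp [cellFaces]
  rw [hunion]
  refine measure_iUnion_null fun i => measure_iUnion_null fun n => ?_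
  simpa [volume_pi] using Measure.pi_hyperplane (fun _ : Fin 3 => (volume : Measure ℝ)) i (ε * n)

lemma OmHat_inter_diff_cellFaces {ε : ℝ} (hε : 0 < ε) (Ω : Set V3) :
    (OmHat ε Ω ∩ Ω) \ cellFaces ε = ⋃ ξ : Xi ε Ω, cellOf ε ξ := by
  ext x
  simp only [Set.mem_sdiff, Set.mem_inter_iff, Set.mem_iUnion]
  constructor
  · rintro ⟨⟨hxΩ', -⟩, hxF⟩
    obtain ⟨ξ, hξ, hx⟩ := Set.mem_iUnion₂.mp (interior_subset hxΩ')
    exact ⟨⟨ξ, hξ⟩, mem_cellOf_of_mem_closure hx hxF⟩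
  · rintro ⟨ξ, hx⟩
    exact ⟨⟨cellOf_subset_OmHat ξ.2 hx, ξ.2 hx⟩,
      Set.disjoint_left.mp (disjoint_cellOf_cellFaces hε ξ) hx⟩

lemma setLIntegral_eq_tsum_cellOf {ε : ℝ} (hε : 0 < ε) (Ω : Set V3) {F : V3 → ℝ≥0∞}
    (hF : ∀ x ∉ OmHat ε Ω, F x = 0) :
    ∫⁻ x in Ω, F x = ∑' ξ : Xi ε Ω, ∫⁻ x in cellOf ε ξ, F x := by
  have hOmHat : MeasurableSet (OmHat ε Ω) := isOpen_interior.measurableSet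
  have hF' : (OmHat ε Ω).indicator F = F := Set.indicator_eq_self.mpr fun x hx =>
    not_not.mp fun h => hx (hF x h)
  have hdisj : Pairwise (Function.onFun Disjoint fun ξ : Xi ε Ω => cellOf ε ξ) :=
    fun _ _ h => pairwise_disjoint_cellOf hε (Subtype.coe_injective.ne h)
  calc ∫⁻ x in Ω, F x
      = ∫⁻ x in OmHat ε Ω ∩ Ω, F x := by
        rw [← Measure.restrict_restrict hOmHat, ← lintegral_indicator hOmHat, hF']
    _ = ∫⁻ x in (OmHat ε Ω ∩ Ω) \ cellFaces ε, F x :=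
        setLIntegral_congr (sdiff_ae_eq_self.mpr
          (measure_mono_null Set.inter_subset_right (volume_cellFaces ε))).symm
    _ = ∑' ξ : Xi ε Ω, ∫⁻ x in cellOf ε ξ, F x := by
        rw [OmHat_inter_diff_cellFaces hε]
        exact lintegral_iUnion (fun ξ : Xi ε Ω => (isOpen_cellOf ε ξ).measurableSet) hdisj F

lemma cellCrack_eq_image (ε : ℝ) (ξ : Fin 3 → ℤ) (S : Set V3) :
    cellCrack ε ξ S = (fun y => cellCorner ε ξ + ε • y) '' S :=
  rfl

lemma unfoldOp_of_mem_cellOf {β : Type*} [Zero β] {ε : ℝ} (hε : 0 < ε) {Ω : Set V3}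
    {ξ : Fin 3 → ℤ} (hξ : ξ ∈ Xi ε Ω) {x : V3} (hx : x ∈ cellOf ε ξ) (φ : V3 → β) (y : V3) :
    unfoldOp ε Ω φ (x, y) = φ (cellCorner ε ξ + ε • y) := by
  rw [unfoldOp, if_pos (cellOf_subset_OmHat hξ hx), floorPt_of_mem_cellOf hε hx]

lemma setLIntegral_cellOf_gaglSq_unfoldOp {ε : ℝ} (hε : 0 < ε) (α : ℝ) {Ω : Set V3}
    (S : Set V3) {ξ : Fin 3 → ℤ} (hξ : ξ ∈ Xi ε Ω) (u : V3 → ℝ) :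
    ∫⁻ x in cellOf ε ξ, gaglSq α S (fun y => unfoldOp ε Ω u (x, y))
      = ENNReal.ofReal (ε ^ (1 + 2 * α)) * gaglSq α (cellCrack ε ξ S) u := by
  have hconst : ∀ x ∈ cellOf ε ξ, gaglSq α S (fun y => unfoldOp ε Ω u (x, y))
      = gaglSq α S (fun y => u (cellCorner ε ξ + ε • y)) := fun x hx => by
    simp_rw [unfoldOp_of_mem_cellOf hε hξ hx]
  have hscale : ENNReal.ofReal (ε ^ 3)
      = ENNReal.ofReal (ε ^ (1 + 2 * α)) * ENNReal.ofReal (ε ^ (2 - 2 * α)) := by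
    rw [← ENNReal.ofReal_mul (by positivity), ← Real.rpow_add hε]
    norm_num
  rw [setLIntegral_congr_fun (isOpen_cellOf ε ξ).measurableSet hconst, setLIntegral_const,
    volume_cellOf hε.le, cellCrack_eq_image, gaglSq_image_add_smul hε, hscale]
  ring

theorem statement3_general
    (Ω S : Set V3) (ε : ℝ) (hε : 0 < ε) (α : ℝ)
    (u : V3 → ℝ) :
    (∫⁻ x in Ω, gaglSq α S (fun y => unfoldOp ε Ω u (x, y)) ∂volume) ^ ((1 : ℝ) / 2)
      = ENNReal.ofReal (ε ^ ((1 : ℝ) / 2 + α)) * (gaglSqSeps ε α Ω S u) ^ ((1 : ℝ) / 2) := by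
  have hvanish : ∀ x ∉ OmHat ε Ω, gaglSq α S (fun y => unfoldOp ε Ω u (x, y)) = 0 :=
    fun x hx => by simp [gaglSq, unfoldOp, hx]
  rw [setLIntegral_eq_tsum_cellOf hε Ω hvanish,
    tsum_congr fun ξ => setLIntegral_cellOf_gaglSq_unfoldOp hε α S ξ.2 u, ENNReal.tsum_mul_left,
    ENNReal.mul_rpow_of_nonneg _ _ (by norm_num), ENNReal.ofReal_rpow_of_pos (by positivity),
    ← Real.rpow_mul hε.le]
  congr 3
  ring

/-- For `u ∈ H^α(S_ε)`, `α ∈ (0,1)`, the Gagliardo semi-norms satisfy the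
exact rescaling identity `‖T^b_ε(u)‖'_{L²(Ω;H^α(S))} = ε^{1/2+α} ‖u‖'_{H^α(S_ε)}`. -/
theorem statement3
    (Ω S : Set V3) (hΩo : IsOpen Ω) (hΩb : Bornology.IsBounded Ω)
    (hScl : IsClosed S) (hSY : S ⊆ Ycube)
    (ε : ℝ) (hε : 0 < ε) (α : ℝ) (hα : α ∈ Set.Ioo (0 : ℝ) 1)
    (u : V3 → ℝ)
    (hu2 : MemLp u 2 (μH[2].restrict (Seps ε Ω S)))
    (huα : gaglSqSeps ε α Ω S u ≠ ⊤) :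
    (∫⁻ x in Ω, gaglSq α S (fun y => unfoldOp ε Ω u (x, y)) ∂volume) ^ ((1 : ℝ) / 2)
      = ENNReal.ofReal (ε ^ ((1 : ℝ) / 2 + α)) * (gaglSqSeps ε α Ω S u) ^ ((1 : ℝ) / 2) :=
  statement3_general Ω S ε hε α u
end
end

section
/- Let u_{ε,G₁} and u_{ε,G₂} be the solutions of the regularized contact problem with given frictions G₁, G₂ ∈ 𝒞**_ε. Then the combined energy norm satisfies N_ε(u_{ε,G₁} − u_{ε,G₂}) ≤ (C₀ / min{ᾱ,κ}) √ε ‖G₁ − G₂‖_{L²(S_ε)}, where N_ε(u)² = ‖e(u)‖²_{L²(Ω*_ε)} + ε²‖∇e(u)‖²_{L²(Ω*_ε)} and C₀ is independent of ε and κ. -/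
/-!
Testing the variational inequality for `u₁` with `u₂` and the one for `u₂` with `u₁` and adding,
the loads cancel and the energy of `w = u₁ - u₂` is bounded by the friction cross term
`∫ (G₁ - G₂) (|[u₂,τ]| - |[u₁,τ]|)`. By Cauchy–Schwarz, the reverse triangle inequality
`| |[u₂,τ]| - |[u₁,τ]| | ≤ |[w_τ]|` and the jump estimate, this term is at most
`C₀ √ε ‖G₁ - G₂‖ ‖e(w)‖ ≤ C₀ √ε ‖G₁ - G₂‖ N_ε(w)`, while coercivity bounds the energy below by
`min{ᾱ, κ} N_ε(w)²`.
-/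

open MeasureTheory

theorem LinearMap.BilinForm.apply_sub_sub_le_of_variational_ineq {H : Type*} [AddCommGroup H]
    [Module ℝ H] (B : LinearMap.BilinForm ℝ H) (f : H →ₗ[ℝ] ℝ) {u₁ u₂ : H} {r₁ r₂ : ℝ}
    (h₁ : f (u₂ - u₁) ≤ B u₁ (u₂ - u₁) + r₁) (h₂ : f (u₁ - u₂) ≤ B u₂ (u₁ - u₂) + r₂) :
    B (u₁ - u₂) (u₁ - u₂) ≤ r₁ + r₂ := by
  simp only [map_sub, LinearMap.sub_apply] at h₁ h₂ ⊢
  linarith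

section Integrals

variable {γ : Type*} [MeasurableSpace γ] {μ : Measure γ}

theorem aestronglyMeasurable_abs_of_integrable_sq {p : γ → ℝ}
    (hp : Integrable (fun x => p x ^ 2) μ) : AEStronglyMeasurable (fun x => |p x|) μ :=
  (Real.continuous_sqrt.comp_aestronglyMeasurable hp.aestronglyMeasurable).congr
    (.of_forall fun x => Real.sqrt_sq_eq_abs (p x))

theorem memLp_two_abs_of_integrable_sq {p : γ → ℝ} (hp : Integrable (fun x => p x ^ 2) μ) :
    MemLp (fun x => |p x|) 2 μ :=
  (memLp_two_iff_integrable_sq (aestronglyMeasurable_abs_of_integrable_sq hp)).2 <| by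
    simpa only [sq_abs] using hp

/-- Cauchy–Schwarz without any measurability assumption on `p` and `q` themselves. -/
theorem abs_integral_mul_le_sqrt_mul_sqrt {p q : γ → ℝ} (hp : Integrable (fun x => p x ^ 2) μ)
    (hq : Integrable (fun x => q x ^ 2) μ) :
    |∫ x, p x * q x ∂μ| ≤ √(∫ x, p x ^ 2 ∂μ) * √(∫ x, q x ^ 2 ∂μ) := by
  have holder := integral_mul_le_Lp_mul_Lq_of_nonneg Real.HolderConjugate.two_two
    (.of_forall fun x => abs_nonneg (p x)) (.of_forall fun x => abs_nonneg (q x))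
    (by simpa using memLp_two_abs_of_integrable_sq hp)
    (by simpa using memLp_two_abs_of_integrable_sq hq)
  simp only [Real.rpow_two, sq_abs, ← Real.sqrt_eq_rpow] at holder
  calc |∫ x, p x * q x ∂μ| ≤ ∫ x, |p x * q x| ∂μ := by
        simpa only [Real.norm_eq_abs] using norm_integral_le_integral_norm (fun x => p x * q x)
    _ = ∫ x, |p x| * |q x| ∂μ := by simp only [abs_mul]
    _ ≤ _ := holder

theorem integral_mul_sub_add_integral_mul_sub_le {G₁ G₂ q₁ q₂ : γ → ℝ}
    (hG : Integrable (fun x => (G₁ x - G₂ x) ^ 2) μ)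
    (hq : Integrable (fun x => (q₁ x - q₂ x) ^ 2) μ)
    (h₁₁ : Integrable (fun x => G₁ x * q₁ x) μ) (h₁₂ : Integrable (fun x => G₁ x * q₂ x) μ)
    (h₂₁ : Integrable (fun x => G₂ x * q₁ x) μ) (h₂₂ : Integrable (fun x => G₂ x * q₂ x) μ) :
    (∫ x, G₁ x * (q₂ x - q₁ x) ∂μ) + ∫ x, G₂ x * (q₁ x - q₂ x) ∂μ
      ≤ √(∫ x, (G₁ x - G₂ x) ^ 2 ∂μ) * √(∫ x, (q₁ x - q₂ x) ^ 2 ∂μ) := by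
  have hq' : Integrable (fun x => (q₂ x - q₁ x) ^ 2) μ := by simpa only [sub_sq_comm] using hq
  rw [← integral_add (by simp_rw [mul_sub]; exact h₁₂.sub h₁₁)
    (by simp_rw [mul_sub]; exact h₂₁.sub h₂₂)]
  calc ∫ x, G₁ x * (q₂ x - q₁ x) + G₂ x * (q₁ x - q₂ x) ∂μ
      = ∫ x, (G₁ x - G₂ x) * (q₂ x - q₁ x) ∂μ := by congr 1; ext x; ring
    _ ≤ |∫ x, (G₁ x - G₂ x) * (q₂ x - q₁ x) ∂μ| := le_abs_self _
    _ ≤ √(∫ x, (G₁ x - G₂ x) ^ 2 ∂μ) * √(∫ x, (q₂ x - q₁ x) ^ 2 ∂μ) :=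
      abs_integral_mul_le_sqrt_mul_sqrt hG hq'
    _ = _ := by simp only [sub_sq_comm (q₂ _)]

variable {E : Type*} [SeminormedAddCommGroup E]

theorem sq_norm_sub_norm_le (v w : E) : (‖v‖ - ‖w‖) ^ 2 ≤ ‖v - w‖ ^ 2 :=
  sq_le_sq.2 <| by simpa only [abs_norm] using abs_norm_sub_norm_le v w

theorem integrable_sq_norm_sub_norm {F₁ F₂ : γ → E} (h₁ : Integrable (fun x => ‖F₁ x‖ ^ 2) μ)
    (h₂ : Integrable (fun x => ‖F₂ x‖ ^ 2) μ) (h : Integrable (fun x => ‖F₁ x - F₂ x‖ ^ 2) μ) :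
    Integrable (fun x => (‖F₁ x‖ - ‖F₂ x‖) ^ 2) μ := by
  have hmeas : ∀ {F : γ → E}, Integrable (fun x => ‖F x‖ ^ 2) μ →
      AEStronglyMeasurable (fun x => ‖F x‖) μ := fun hF => by
    simpa only [abs_norm] using aestronglyMeasurable_abs_of_integrable_sq hF
  refine h.mono (((hmeas h₁).sub (hmeas h₂)).pow 2) (.of_forall fun x => ?_)
  simp only [Real.norm_eq_abs, abs_pow, abs_norm, sq_abs]
  exact sq_norm_sub_norm_le _ _

theorem integral_mul_norm_sub_add_integral_mul_norm_sub_le {G₁ G₂ : γ → ℝ} {F₁ F₂ : γ → E}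
    (hG : Integrable (fun x => (G₁ x - G₂ x) ^ 2) μ) (hF₁ : Integrable (fun x => ‖F₁ x‖ ^ 2) μ)
    (hF₂ : Integrable (fun x => ‖F₂ x‖ ^ 2) μ) (hF : Integrable (fun x => ‖(F₁ - F₂) x‖ ^ 2) μ)
    (h₁₁ : Integrable (fun x => G₁ x * ‖F₁ x‖) μ) (h₁₂ : Integrable (fun x => G₁ x * ‖F₂ x‖) μ)
    (h₂₁ : Integrable (fun x => G₂ x * ‖F₁ x‖) μ) (h₂₂ : Integrable (fun x => G₂ x * ‖F₂ x‖) μ) :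
    (∫ x, G₁ x * (‖F₂ x‖ - ‖F₁ x‖) ∂μ) + ∫ x, G₂ x * (‖F₁ x‖ - ‖F₂ x‖) ∂μ
      ≤ √(∫ x, (G₁ x - G₂ x) ^ 2 ∂μ) * √(∫ x, ‖(F₁ - F₂) x‖ ^ 2 ∂μ) := by
  have hdiff := integrable_sq_norm_sub_norm hF₁ hF₂ hF
  refine (integral_mul_sub_add_integral_mul_sub_le hG hdiff h₁₁ h₁₂ h₂₁ h₂₂).trans ?_
  exact mul_le_mul_of_nonneg_left (Real.sqrt_le_sqrt <| integral_mono hdiff hF fun x =>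
    sq_norm_sub_norm_le _ _) (Real.sqrt_nonneg _)

end Integrals

theorem min_mul_add_le {α κ x y A B : ℝ} (hx : 0 ≤ x) (hy : 0 ≤ y) (hκ : 0 ≤ κ)
    (hA : α * x ≤ A) (hB : y ≤ B) : min α κ * (x + y) ≤ A + κ * B :=
  calc min α κ * (x + y) = min α κ * x + min α κ * y := mul_add _ _ _
    _ ≤ α * x + κ * y := by gcongr; exacts [min_le_left _ _, min_le_right _ _]
    _ ≤ A + κ * B := by gcongr

theorem le_div_of_mul_sq_le_mul {m N c : ℝ} (hm : 0 < m) (hN : 0 ≤ N) (hc : 0 ≤ c)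
    (h : m * N ^ 2 ≤ c * N) : N ≤ c / m := by
  rcases hN.eq_or_lt with rfl | hN
  · positivity
  rw [le_div_iff₀ hm]
  nlinarith

theorem statement13_general
    {H : Type*} [AddCommGroup H] [Module ℝ H]
    {γ : Type*} [MeasurableSpace γ] (μ : Measure γ)
    (K : Set H)
    (a b : H →ₗ[ℝ] H →ₗ[ℝ] ℝ) (f : H →ₗ[ℝ] ℝ)
    (Ee Dd : H → ℝ) (J : H →ₗ[ℝ] (γ → Fin 3 → ℝ))
    (ε κ ᾱ C₀ : ℝ) (hκ : 0 < κ) (hᾱ : 0 < ᾱ) (hC₀ : 0 < C₀)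
    (hacoer : ∀ w, ᾱ * Ee w ^ 2 ≤ a w w)
    (hbcoer : ∀ w, Dd w ^ 2 ≤ b w w)
    -- the jump estimate `‖[w]_{S_ε}‖_{L²(S_ε)} ≤ C₀ √ε ‖e(w)‖_{L²(Ω*_ε)}`
    (hjump : ∀ w, (∫ x, ‖J w x‖ ^ 2 ∂μ) ≤ (C₀ * Real.sqrt ε * Ee w) ^ 2)
    (hJsq : ∀ w, Integrable (fun x => ‖J w x‖ ^ 2) μ)
    (G₁ G₂ : γ → ℝ)
    (hGsq : Integrable (fun x => (G₁ x - G₂ x) ^ 2) μ)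
    (u₁ u₂ : H) (hu₁ : u₁ ∈ K) (hu₂ : u₂ ∈ K)
    (hI₁₁ : Integrable (fun x => G₁ x * ‖J u₁ x‖) μ)
    (hI₁₂ : Integrable (fun x => G₁ x * ‖J u₂ x‖) μ)
    (hI₂₁ : Integrable (fun x => G₂ x * ‖J u₁ x‖) μ)
    (hI₂₂ : Integrable (fun x => G₂ x * ‖J u₂ x‖) μ)
    -- the two variational inequalities with given frictions `G₁` and `G₂`
    (hVI₁ : ∀ v ∈ K, a u₁ (v - u₁) + κ * ε ^ 2 * b u₁ (v - u₁)
        + (∫ x, G₁ x * (‖J v x‖ - ‖J u₁ x‖) ∂μ) ≥ f (v - u₁))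
    (hVI₂ : ∀ v ∈ K, a u₂ (v - u₂) + κ * ε ^ 2 * b u₂ (v - u₂)
        + (∫ x, G₂ x * (‖J v x‖ - ‖J u₂ x‖) ∂μ) ≥ f (v - u₂)) :
    Real.sqrt (Ee (u₁ - u₂) ^ 2 + ε ^ 2 * Dd (u₁ - u₂) ^ 2)
      ≤ C₀ / min ᾱ κ * Real.sqrt ε * Real.sqrt (∫ x, (G₁ x - G₂ x) ^ 2 ∂μ) := by
  set w := u₁ - u₂
  set N := √(Ee w ^ 2 + ε ^ 2 * Dd w ^ 2)
  set B := a + (κ * ε ^ 2) • b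
  have hB : ∀ u v, B u v = a u v + κ * (ε ^ 2 * b u v) := fun u v => by
    simp only [B, LinearMap.add_apply, LinearMap.smul_apply, smul_eq_mul, mul_assoc]
  have henergy : B w w ≤ (∫ x, G₁ x * (‖J u₂ x‖ - ‖J u₁ x‖) ∂μ)
      + ∫ x, G₂ x * (‖J u₁ x‖ - ‖J u₂ x‖) ∂μ :=
    LinearMap.BilinForm.apply_sub_sub_le_of_variational_ineq B f
      (by simpa only [hB, mul_assoc] using hVI₁ u₂ hu₂)
      (by simpa only [hB, mul_assoc] using hVI₂ u₁ hu₁)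
  have hfriction := integral_mul_norm_sub_add_integral_mul_norm_sub_le hGsq (hJsq u₁) (hJsq u₂)
    (map_sub J u₁ u₂ ▸ hJsq w) hI₁₁ hI₁₂ hI₂₁ hI₂₂
  rw [← map_sub] at hfriction
  have hjump_w : √(∫ x, ‖J w x‖ ^ 2 ∂μ) ≤ C₀ * √ε * |Ee w| := by
    refine (Real.sqrt_le_sqrt (hjump w)).trans_eq ?_
    rw [Real.sqrt_sq_eq_abs, abs_mul, abs_mul, abs_of_pos hC₀, abs_of_nonneg (Real.sqrt_nonneg ε)]
  have hcoercive : min ᾱ κ * N ^ 2 ≤ B w w := by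
    rw [Real.sq_sqrt (by positivity), hB]
    exact min_mul_add_le (sq_nonneg _) (by positivity) hκ.le (hacoer w)
      (mul_le_mul_of_nonneg_left (hbcoer w) (sq_nonneg ε))
  have hEN : |Ee w| ≤ N := Real.abs_le_sqrt (le_add_of_nonneg_right (by positivity))
  calc N ≤ (√(∫ x, (G₁ x - G₂ x) ^ 2 ∂μ) * (C₀ * √ε)) / min ᾱ κ := by
        refine le_div_of_mul_sq_le_mul (lt_min hᾱ hκ) (Real.sqrt_nonneg _) (by positivity) ?_
        calc min ᾱ κ * N ^ 2 ≤ B w w := hcoercive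
          _ ≤ √(∫ x, (G₁ x - G₂ x) ^ 2 ∂μ) * (C₀ * √ε * |Ee w|) :=
            henergy.trans (hfriction.trans (by gcongr))
          _ ≤ √(∫ x, (G₁ x - G₂ x) ^ 2 ∂μ) * (C₀ * √ε * N) := by gcongr
          _ = √(∫ x, (G₁ x - G₂ x) ^ 2 ∂μ) * (C₀ * √ε) * N := by ring
    _ = _ := by ring

/-- Continuous dependence on the given friction for the regularized contact
problem.  If `u_{ε,G₁}`, `u_{ε,G₂}` solve the regularized problem with frictions
`G₁, G₂ ∈ 𝒞**_ε`, then `N_ε(u_{ε,G₁} − u_{ε,G₂}) ≤ (C₀/min{ᾱ,κ}) √ε ‖G₁−G₂‖_{L²(S_ε)}`,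
where `N_ε(u)² = ‖e(u)‖²_{L²(Ω*_ε)} + ε²‖∇e(u)‖²_{L²(Ω*_ε)}` and `C₀` is independent of `ε, κ`.

Abstract setting: `H` is the displacement space `H_ε(Ω) ∩ 𝒦_ε ⊆ K`; `Ee u = ‖e(u)‖_{L²(Ω*_ε)}`
and `Dd u = ‖∇e(u)‖_{L²(Ω*_ε)}`; `a` is the elastic form (coercive: `a(w,w) ≥ ᾱ Ee(w)²`),
`b` the regularizing form (`b(w,w) ≥ Dd(w)²`); `(γ, μ)` is the crack `S_ε` with its surface
measure, `J w` the tangential jump `[w_τ]_{S_ε}`, satisfying the jump estimate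
`‖J w‖_{L²(S_ε)} ≤ C₀ √ε Ee(w)`; the friction term is `(G, |[v_τ]|)_ε = ∫ G ‖J v‖ dμ`. -/
theorem statement13
    {H : Type*} [AddCommGroup H] [Module ℝ H]
    {γ : Type*} [MeasurableSpace γ] (μ : Measure γ)
    (K : Set H)
    (a b : H →ₗ[ℝ] H →ₗ[ℝ] ℝ) (f : H →ₗ[ℝ] ℝ)
    (Ee Dd : H → ℝ) (J : H →ₗ[ℝ] (γ → Fin 3 → ℝ))
    (ε κ ᾱ C₀ : ℝ) (hε : 0 < ε) (hκ : 0 < κ) (hᾱ : 0 < ᾱ) (hC₀ : 0 < C₀)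
    (hEnn : ∀ w, 0 ≤ Ee w) (hDnn : ∀ w, 0 ≤ Dd w)
    (hacoer : ∀ w, ᾱ * Ee w ^ 2 ≤ a w w)
    (hbcoer : ∀ w, Dd w ^ 2 ≤ b w w)
    -- the jump estimate `‖[w]_{S_ε}‖_{L²(S_ε)} ≤ C₀ √ε ‖e(w)‖_{L²(Ω*_ε)}`
    (hjump : ∀ w, (∫ x, ‖J w x‖ ^ 2 ∂μ) ≤ (C₀ * Real.sqrt ε * Ee w) ^ 2)
    (hJsq : ∀ w, Integrable (fun x => ‖J w x‖ ^ 2) μ)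
    (G₁ G₂ : γ → ℝ)
    (hGsq : Integrable (fun x => (G₁ x - G₂ x) ^ 2) μ)
    (u₁ u₂ : H) (hu₁ : u₁ ∈ K) (hu₂ : u₂ ∈ K)
    (hI₁₁ : Integrable (fun x => G₁ x * ‖J u₁ x‖) μ)
    (hI₁₂ : Integrable (fun x => G₁ x * ‖J u₂ x‖) μ)
    (hI₂₁ : Integrable (fun x => G₂ x * ‖J u₁ x‖) μ)
    (hI₂₂ : Integrable (fun x => G₂ x * ‖J u₂ x‖) μ)
    -- the two variational inequalities with given frictions `G₁` and `G₂`
    (hVI₁ : ∀ v ∈ K, a u₁ (v - u₁) + κ * ε ^ 2 * b u₁ (v - u₁)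
        + (∫ x, G₁ x * (‖J v x‖ - ‖J u₁ x‖) ∂μ) ≥ f (v - u₁))
    (hVI₂ : ∀ v ∈ K, a u₂ (v - u₂) + κ * ε ^ 2 * b u₂ (v - u₂)
        + (∫ x, G₂ x * (‖J v x‖ - ‖J u₂ x‖) ∂μ) ≥ f (v - u₂)) :
    Real.sqrt (Ee (u₁ - u₂) ^ 2 + ε ^ 2 * Dd (u₁ - u₂) ^ 2)
      ≤ C₀ / min ᾱ κ * Real.sqrt ε * Real.sqrt (∫ x, (G₁ x - G₂ x) ^ 2 ∂μ) :=
  statement13_general μ K a b f Ee Dd J ε κ ᾱ C₀ hκ hᾱ hC₀ hacoer hbcoer hjump hJsq G₁ G₂ hGsq u₁ u₂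
    hu₁ hu₂ hI₁₁ hI₁₂ hI₂₁ hI₂₂ hVI₁ hVI₂
end
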